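/- Let r ∈ ℕ⁺, k ∈ {0,1,…,r}, and θ₁,…,θ_r ∈ {0,1}. With δ = 2^{−r}, T(x) = σ(x/δ+1) − σ(x/δ), and β_i = ∑_{j=i}^{r} θ_j 2^{−(j−i+1)}, one has ∑_{i=1}^{k} θ_i = ∑_{i=1}^{r} σ( T(β_i − 1/2) + T(k − i) − 1 ), where σ is ReLU. -/

import Mathlib

/-!
For `θ_i ∈ {0,1}` the truncated binary fraction `β_i = 0.θ_i⋯θ_r` is at least `1/2` when
`θ_i = 1` and at most `1/2 - 2^{-(r-i+1)} ≤ 1/2 - δ` when `θ_i = 0`. Since `T` is `1` on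
`[0, ∞)` and `0` on `(-∞, -δ]`, this gives `T(β_i - 1/2) = θ_i`, and likewise
`T(k - i) = [i ≤ k]`. The ReLU of `a + b - 1` is `a b` for bits `a, b`, so the `i`-th summand
is `θ_i [i ≤ k]`.
-/

open Finset

noncomputable def ramp (δ x : ℝ) : ℝ := max 0 (x / δ + 1) - max 0 (x / δ)

lemma ramp_of_nonneg {δ x : ℝ} (hδ : 0 < δ) (hx : 0 ≤ x) : ramp δ x = 1 := by
  have : 0 ≤ x / δ := by positivity
  rw [ramp, max_eq_right (by linarith), max_eq_right this]
  ring

lemma ramp_of_le_neg {δ x : ℝ} (hδ : 0 < δ) (hx : x ≤ -δ) : ramp δ x = 0 := by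
  have : x / δ ≤ -1 := by rwa [div_le_iff₀ hδ, neg_one_mul]
  rw [ramp, max_eq_left (by linarith), max_eq_left (by linarith)]
  ring

noncomputable def binFrac (θ : ℕ → ℝ) (r m : ℕ) : ℝ := ∑ j ∈ Icc m r, θ j / 2 ^ (j - m + 1)

lemma sum_Ioc_one_div_two_pow {m r : ℕ} (h : m ≤ r) :
    ∑ j ∈ Ioc m r, (1 : ℝ) / 2 ^ (j - m + 1) = 1 / 2 - 1 / 2 ^ (r - m + 1) := by
  induction r, h using Nat.le_induction with
  | base => simp
  | succ r hmr ih =>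
    rw [sum_Ioc_succ_top hmr, ih, show r + 1 - m = r - m + 1 by omega, pow_succ _ (r - m + 1)]
    ring

lemma binFrac_eq_head_add_tail (θ : ℕ → ℝ) {m r : ℕ} (h : m ≤ r) :
    binFrac θ r m = θ m / 2 + ∑ j ∈ Ioc m r, θ j / 2 ^ (j - m + 1) := by
  rw [binFrac, Icc_eq_cons_Ioc h, sum_cons, Nat.sub_self, zero_add, pow_one]

lemma half_head_le_binFrac {θ : ℕ → ℝ} {m r : ℕ} (h : m ≤ r)
    (hθ : ∀ j ∈ Ioc m r, 0 ≤ θ j) : θ m / 2 ≤ binFrac θ r m := by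
  rw [binFrac_eq_head_add_tail θ h, le_add_iff_nonneg_right]
  exact sum_nonneg fun j hj => div_nonneg (hθ j hj) (by positivity)

lemma binFrac_le_half_head_add {θ : ℕ → ℝ} {m r : ℕ} (h : m ≤ r)
    (hθ : ∀ j ∈ Ioc m r, θ j ≤ 1) :
    binFrac θ r m ≤ θ m / 2 + (1 / 2 - 1 / 2 ^ (r - m + 1)) := by
  rw [binFrac_eq_head_add_tail θ h, ← sum_Ioc_one_div_two_pow h]
  gcongr with j hj
  exact hθ j hj

lemma max_zero_add_sub_one_of_bits {a b : ℝ} (ha : a = 0 ∨ a = 1) (hb : b = 0 ∨ b = 1) :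
    max 0 (a + b - 1) = a * b := by
  rcases ha with rfl | rfl <;> rcases hb with rfl | rfl <;> norm_num

lemma ramp_binFrac_sub_half {θ : ℕ → ℝ} {i r : ℕ} (hi : 1 ≤ i) (hir : i ≤ r)
    (hθ : ∀ j ∈ Icc i r, θ j = 0 ∨ θ j = 1) :
    ramp (1 / 2 ^ r) (binFrac θ r i - 1 / 2) = θ i := by
  have hδ : (0 : ℝ) < 1 / 2 ^ r := by positivity
  have hunit : ∀ j ∈ Ioc i r, 0 ≤ θ j ∧ θ j ≤ 1 := fun j hj => by
    rcases hθ j (Ioc_subset_Icc_self hj) with h | h <;> simp [h]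
  rcases hθ i (left_mem_Icc.2 hir) with h0 | h1
  · have hβ := binFrac_le_half_head_add hir fun j hj => (hunit j hj).2
    have hδle : (1 : ℝ) / 2 ^ r ≤ 1 / 2 ^ (r - i + 1) :=
      one_div_pow_le_one_div_pow_of_le one_le_two (by omega)
    rw [h0] at hβ ⊢
    exact ramp_of_le_neg hδ (by linarith)
  · have hβ := half_head_le_binFrac hir fun j hj => (hunit j hj).1
    rw [h1] at hβ ⊢
    exact ramp_of_nonneg hδ (by linarith)

lemma ramp_natCast_sub_natCast {δ : ℝ} (hδ : 0 < δ) (hδ1 : δ ≤ 1) (k i : ℕ) :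
    ramp δ (k - i) = if i ≤ k then 1 else 0 := by
  split_ifs with h
  · exact ramp_of_nonneg hδ (sub_nonneg.2 (by exact_mod_cast h))
  · have : (k : ℝ) + 1 ≤ i := by exact_mod_cast (by omega : k + 1 ≤ i)
    exact ramp_of_le_neg hδ (by linarith)

theorem stmt_17_general (r : ℕ) (k : ℕ) (hk : k ≤ r) (θ : ℕ → ℝ)
    (hθ : ∀ j, 1 ≤ j → j ≤ r → θ j = 0 ∨ θ j = 1) :
    (let δ : ℝ := 1 / 2 ^ r
     let T : ℝ → ℝ := fun x => max 0 (x / δ + 1) - max 0 (x / δ)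
     let β : ℕ → ℝ := fun m => ∑ j ∈ Finset.Icc m r, θ j / 2 ^ (j - m + 1)
     (∑ i ∈ Finset.Icc 1 k, θ i)
       = ∑ i ∈ Finset.Icc 1 r, max 0 (T (β i - 1/2) + T ((k : ℝ) - i) - 1)) := by
  intro δ T β
  have hsummand : ∀ i ∈ Icc 1 r,
      max 0 (T (β i - 1 / 2) + T ((k : ℝ) - i) - 1) = if i ≤ k then θ i else 0 := by
    intro i hi
    obtain ⟨hi1, hir⟩ := mem_Icc.1 hi
    have hdigit : T (β i - 1 / 2) = θ i :=
      ramp_binFrac_sub_half hi1 hir fun j hj => hθ j (hi1.trans (mem_Icc.1 hj).1) (mem_Icc.1 hj).2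
    have hindex : T ((k : ℝ) - i) = if i ≤ k then 1 else 0 :=
      ramp_natCast_sub_natCast (by positivity)
        (div_le_one_of_le₀ (one_le_pow₀ one_le_two) (by positivity)) k i
    rw [hdigit, hindex, max_zero_add_sub_one_of_bits (hθ i hi1 hir) (by split_ifs <;> simp),
      mul_ite, mul_one, mul_zero]
  rw [sum_congr rfl hsummand, ← sum_filter]
  congr 1
  ext i
  simp only [mem_filter, mem_Icc]
  omega

theorem stmt_17 (r : ℕ) (hr : 0 < r) (k : ℕ) (hk : k ≤ r) (θ : ℕ → ℝ)
    (hθ : ∀ j, 1 ≤ j → j ≤ r → θ j = 0 ∨ θ j = 1) :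
    (let δ : ℝ := 1 / 2 ^ r
     let T : ℝ → ℝ := fun x => max 0 (x / δ + 1) - max 0 (x / δ)
     let β : ℕ → ℝ := fun m => ∑ j ∈ Finset.Icc m r, θ j / 2 ^ (j - m + 1)
     (∑ i ∈ Finset.Icc 1 k, θ i)
       = ∑ i ∈ Finset.Icc 1 r, max 0 (T (β i - 1/2) + T ((k : ℝ) - i) - 1)) :=
  stmt_17_general r k hk θ hθ
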